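/- With the rounding scheme W_i(e)=b(i)·⌈W(e)/b(i)⌉ where b(i)=(1+ε)^i and ε∈O(1), for i = max{0, ⌊log_{1+ε}(ε·Wd(v,w)/h_{v,w})⌋} one has (1+ε)·Wd(v,w) ≤ C·b(i)·h_{v,w}/ε for an absolute constant C (i.e., (1+ε)Wd(v,w) ∈ O(b(i)h_{v,w}/ε)). Consequently Wd_i(v,w)/b(i) ∈ O(h_{v,w}/ε). -/

import Mathlib

/-!
The index `i` is chosen so that the scale `b = (1+ε)^i` overshoots `ε·Wd/h` by less than a factor
`1+ε`, i.e. `ε·Wd < (1+ε)·b·h`; the first bound is a rearrangement of this. Rounding each of the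
`h` edges of `p` up to a multiple of `b` adds less than `b` per edge, so `Wd_i ≤ Wd + h·b`, and
dividing by `b` gives the second bound with the same constant `(1+εmax)^2`.
-/

noncomputable def walkWeight {V : Type*} {G : SimpleGraph V} (W : Sym2 V → ℝ)
    {u v : V} (p : G.Walk u v) : ℝ :=
  (p.edges.map W).sum

section WalkWeight

variable {V : Type*} {G : SimpleGraph V} {u v : V}

lemma walkWeight_nonneg {W : Sym2 V → ℝ} (p : G.Walk u v) (hW : ∀ e ∈ p.edges, 0 ≤ W e) :
    0 ≤ walkWeight W p :=
  List.sum_nonneg (by simpa using hW)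

lemma length_le_walkWeight {W : Sym2 V → ℝ} (p : G.Walk u v) (hW : ∀ e ∈ p.edges, 1 ≤ W e) :
    (p.length : ℝ) ≤ walkWeight W p := by
  simpa [walkWeight] using List.card_nsmul_le_sum (p.edges.map W) 1 (by simpa using hW)

lemma walkWeight_le_add_length_mul {W W' : Sym2 V → ℝ} {c : ℝ} (p : G.Walk u v)
    (h : ∀ e ∈ p.edges, W e ≤ W' e + c) :
    walkWeight W p ≤ walkWeight W' p + p.length * c := by
  have := List.sum_le_sum (g := fun e => W' e + c) h
  simpa [walkWeight, List.sum_map_add] using this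

end WalkWeight

lemma mul_ceil_div_lt_add {a b : ℝ} (hb : 0 < b) : b * ⌈a / b⌉ < a + b := by
  have := mul_lt_mul_of_pos_left (Int.ceil_lt_add_one (a / b)) hb
  rwa [mul_add, mul_div_cancel₀ _ hb.ne', mul_one] at this

lemma mul_ceil_div_nonneg {a b : ℝ} (ha : 0 ≤ a) (hb : 0 < b) : 0 ≤ b * ⌈a / b⌉ :=
  mul_nonneg hb.le (by exact_mod_cast Int.ceil_nonneg (div_nonneg ha hb.le))

lemma lt_pow_toNat_floor_logb_succ {β x : ℝ} (hβ : 1 < β) (hx : 0 < x) :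
    x < β ^ (⌊Real.logb β x⌋.toNat + 1) := by
  rw [← Real.rpow_natCast, ← Real.logb_lt_iff_lt_rpow hβ hx]
  have hfloor_le : (⌊Real.logb β x⌋ : ℝ) ≤ ⌊Real.logb β x⌋.toNat := by
    exact_mod_cast Int.self_le_toNat _
  push_cast
  linarith [Int.lt_floor_add_one (Real.logb β x)]

section ScaleArithmetic

variable {ε εmax d b h : ℝ}

lemma one_add_mul_le_of_mul_lt (hε : 0 < ε) (hεmax : ε ≤ εmax) (hb : 0 < b) (hh : 0 < h)
    (hd : ε * d < (1 + ε) * b * h) : (1 + ε) * d ≤ (1 + εmax) ^ 2 * b * h / ε := by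
  rw [le_div_iff₀ hε]
  calc (1 + ε) * d * ε = (1 + ε) * (ε * d) := by ring
    _ ≤ (1 + ε) * ((1 + ε) * b * h) := by gcongr
    _ = (1 + ε) ^ 2 * (b * h) := by ring
    _ ≤ (1 + εmax) ^ 2 * (b * h) := by gcongr
    _ = (1 + εmax) ^ 2 * b * h := by ring

lemma add_mul_div_le_of_mul_lt (hε : 0 < ε) (hεmax : ε ≤ εmax) (hb : 0 < b) (hh : 0 < h)
    (hd : ε * d < (1 + ε) * b * h) : (d + h * b) / b ≤ (1 + εmax) ^ 2 * h / ε := by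
  rw [div_le_div_iff₀ hb hε]
  calc (d + h * b) * ε = ε * d + ε * (h * b) := by ring
    _ ≤ (1 + ε) * b * h + ε * (h * b) := by gcongr
    _ ≤ (1 + ε) ^ 2 * (h * b) := by nlinarith [mul_nonneg (mul_pos hh hb).le (sq_nonneg ε)]
    _ ≤ (1 + εmax) ^ 2 * (h * b) := by gcongr
    _ = (1 + εmax) ^ 2 * h * b := by ring

end ScaleArithmetic

/-- With the rounding scheme `W_i(e) = b(i)·⌈W(e)/b(i)⌉`,
`b(i) = (1+ε)^i` and `ε ∈ O(1)` (i.e. `ε ≤ εmax`), for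
`i = max{0, ⌊log_{1+ε}(ε·Wd(v,w)/h_{v,w})⌋}` there is an absolute constant `C`
with `(1+ε)·Wd(v,w) ≤ C·b(i)·h_{v,w}/ε`; consequently
`Wd_i(v,w)/b(i) ≤ C·h_{v,w}/ε`, i.e. the hop distance in the subdivided
unweighted graph `G_i` is `O(h_{v,w}/ε)`. Here `p` is a minimum-hop shortest
weighted `v`-`w` path, so `Wd(v,w) = W(p)` and `h_{v,w} = ℓ(p)`. -/
theorem rounding_hop_bound (εmax : ℝ) (hmax : 0 < εmax) :
    ∃ C : ℝ, 0 < C ∧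
      ∀ {V : Type} (G : SimpleGraph V) (W : Sym2 V → ℕ), (∀ e, 0 < W e) →
        ∀ ε : ℝ, 0 < ε → ε ≤ εmax → ∀ v w : V, v ≠ w →
          ∀ p : G.Walk v w,
            (∀ q : G.Walk v w, walkWeight (fun e => (W e : ℝ)) p ≤
              walkWeight (fun e => (W e : ℝ)) q) →
            (∀ q : G.Walk v w, walkWeight (fun e => (W e : ℝ)) q =
              walkWeight (fun e => (W e : ℝ)) p → p.length ≤ q.length) →
            (let Wd : ℝ := walkWeight (fun e => (W e : ℝ)) p
             let h : ℕ := p.length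
             let i : ℕ := (⌊Real.logb (1 + ε) (ε * Wd / h)⌋).toNat
             let b : ℝ := (1 + ε) ^ i
             let Wi : Sym2 V → ℝ := fun e => b * (⌈(W e : ℝ) / b⌉ : ℤ)
             (1 + ε) * Wd ≤ C * b * h / ε ∧
               sInf {x : ℝ | ∃ q : G.Walk v w, x = walkWeight Wi q} / b ≤
                 C * h / ε) := by
  refine ⟨(1 + εmax) ^ 2, by positivity, ?_⟩
  intro V G W hW ε hε hεmax v w hvw p _ _ Wd h i b Wi
  have hh : 0 < (h : ℝ) := by exact_mod_cast p.not_nil_iff_lt_length.mp (p.not_nil_of_ne hvw)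
  have hWd : (h : ℝ) ≤ Wd := length_le_walkWeight p fun e _ => by exact_mod_cast hW e
  have hb : 0 < b := by positivity
  have hscale : ε * Wd < (1 + ε) * b * h := by
    have := lt_pow_toNat_floor_logb_succ (by linarith : 1 < 1 + ε)
      (div_pos (mul_pos hε (hh.trans_le hWd)) hh)
    rwa [pow_succ', div_lt_iff₀ hh] at this
  have hrounded : sInf {x : ℝ | ∃ q : G.Walk v w, x = walkWeight Wi q} ≤ Wd + h * b := by
    have hbdd : BddBelow {x : ℝ | ∃ q : G.Walk v w, x = walkWeight Wi q} := by
      refine ⟨0, ?_⟩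
      rintro _ ⟨q, rfl⟩
      exact walkWeight_nonneg q fun _ _ => mul_ceil_div_nonneg (Nat.cast_nonneg _) hb
    exact (csInf_le hbdd ⟨p, rfl⟩).trans
      (walkWeight_le_add_length_mul p fun _ _ => (mul_ceil_div_lt_add hb).le)
  exact ⟨one_add_mul_le_of_mul_lt hε hεmax hb hh hscale,
    (div_le_div_of_nonneg_right hrounded hb.le).trans
      (add_mul_div_le_of_mul_lt hε hεmax hb hh hscale)⟩
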